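/- arXiv:0801.3467 — 2 statements merged into one kernel-verified Lean document; each statement's English description precedes it below -/
import Mathlib

section
/- An n-level quantum system subject to arbitrary Kraus-type dynamics is completely state controllable: for every pair of density matrices ρ_0, ρ_f ∈ D_n there exists a finite family of n×n complex matrices K_1, …, K_λ with ∑_{i=1}^λ K_i† K_i = I_n such that ∑_{i=1}^λ K_i ρ_0 K_i† = ρ_f. -/
/-!
The replacement channel `ρ ↦ (tr ρ) • σ` sends every state to `σ`. Writing `σ = S Sᴴ`, it has the
Kraus operators `S Eᵢⱼ` (`Eᵢⱼ` the matrix units), because `∑ᵢⱼ Eᵢⱼ A Eⱼᵢ = (tr A) • 1`; the same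
identity gives `∑ᵢⱼ (S Eᵢⱼ)ᴴ (S Eᵢⱼ) = tr (S Sᴴ) • 1 = 1`.
-/

open Matrix BigOperators ComplexOrder

namespace Matrix

variable {n α : Type*} [Fintype n] [DecidableEq n]

theorem sum_single_mul_mul_single [Semiring α] (A : Matrix n n α) :
    ∑ i, ∑ j, single i j (1 : α) * A * single j i 1 = A.trace • 1 := by
  simp only [single_mul_mul_single, one_mul, mul_one]
  rw [Finset.sum_comm]
  simp only [sum_single_eq_diagonal, ← smul_one_eq_diagonal, ← Finset.sum_smul]
  rfl

section Replacement

variable [CommSemiring α] [StarRing α]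

def replacementKraus (S : Matrix n n α) (p : n × n) : Matrix n n α :=
  S * single p.1 p.2 1

theorem sum_conjTranspose_replacementKraus_mul (S : Matrix n n α) :
    ∑ p, (replacementKraus S p)ᴴ * replacementKraus S p = (S * Sᴴ).trace • 1 := by
  simp only [replacementKraus, conjTranspose_mul, conjTranspose_single, star_one,
    Fintype.sum_prod_type]
  rw [Finset.sum_comm, trace_mul_comm, ← sum_single_mul_mul_single]
  simp only [Matrix.mul_assoc]

theorem sum_replacementKraus_mul_mul_conjTranspose (S ρ : Matrix n n α) :
    ∑ p, replacementKraus S p * ρ * (replacementKraus S p)ᴴ = ρ.trace • (S * Sᴴ) := by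
  simp only [replacementKraus, conjTranspose_mul, conjTranspose_single, star_one,
    Fintype.sum_prod_type]
  calc ∑ i, ∑ j, S * single i j 1 * ρ * (single j i 1 * Sᴴ)
      = S * (∑ i, ∑ j, single i j 1 * ρ * single j i 1) * Sᴴ := by
        simp only [Matrix.mul_sum, Matrix.sum_mul, Matrix.mul_assoc]
    _ = ρ.trace • (S * Sᴴ) := by
        rw [sum_single_mul_mul_single, Matrix.mul_smul, Matrix.mul_one, Matrix.smul_mul]

end Replacement

theorem PosSemidef.exists_eq_mul_conjTranspose {𝕜 : Type*} [RCLike 𝕜] {A : Matrix n n 𝕜}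
    (hA : A.PosSemidef) : ∃ S : Matrix n n 𝕜, A = S * Sᴴ := by
  open scoped MatrixOrder in
  refine ⟨CFC.sqrt A, ?_⟩
  rw [(nonneg_iff_posSemidef.mp (CFC.sqrt_nonneg A)).isHermitian.eq,
    CFC.sqrt_mul_sqrt_self A (nonneg_iff_posSemidef.mpr hA)]

end Matrix

theorem complete_state_controllability_general (n : ℕ)
    (ρ0 ρf : Matrix (Fin n) (Fin n) ℂ)
    (h0tr : ρ0.trace = 1)
    (hf : ρf.PosSemidef) (hftr : ρf.trace = 1) :
    ∃ (l : ℕ) (K : Fin l → Matrix (Fin n) (Fin n) ℂ),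
      (∑ i, (K i)ᴴ * K i = 1) ∧
      ∑ i, K i * ρ0 * (K i)ᴴ = ρf := by
  obtain ⟨S, rfl⟩ := hf.exists_eq_mul_conjTranspose
  let e := (Fintype.equivFin (Fin n × Fin n)).symm
  refine ⟨_, fun i => replacementKraus S (e i), ?_, ?_⟩
  · rw [e.sum_comp (fun p => (replacementKraus S p)ᴴ * replacementKraus S p),
      sum_conjTranspose_replacementKraus_mul, hftr, one_smul]
  · rw [e.sum_comp (fun p => replacementKraus S p * ρ0 * (replacementKraus S p)ᴴ),
      sum_replacementKraus_mul_mul_conjTranspose, h0tr, one_smul]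

/-- Complete state controllability under arbitrary Kraus-type dynamics: any density matrix
`ρ0` can be steered to any density matrix `ρf` by some Kraus map. -/
theorem complete_state_controllability (n : ℕ)
    (ρ0 ρf : Matrix (Fin n) (Fin n) ℂ)
    (h0 : ρ0.PosSemidef) (h0tr : ρ0.trace = 1)
    (hf : ρf.PosSemidef) (hftr : ρf.trace = 1) :
    ∃ (l : ℕ) (K : Fin l → Matrix (Fin n) (Fin n) ℂ),
      (∑ i, (K i)ᴴ * K i = 1) ∧
      ∑ i, K i * ρ0 * (K i)ᴴ = ρf :=
  complete_state_controllability_general n ρ0 ρf h0tr hf hftr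
end

section
/- Fix n ∈ ℕ, a density matrix ρ ∈ D_n, and a Hermitian n×n matrix O with smallest eigenvalue λ_min and largest eigenvalue λ_max. For λ = n², the objective function J(K_1, …, K_λ) = Tr[(∑_{i=1}^λ K_i ρ K_i†) O] on the complex Stiefel manifold V_n(ℂ^{λn}) = { (K_1, …, K_λ) : ∑_{i=1}^λ K_i† K_i = I_n } attains the global minimum value λ_min and the global maximum value λ_max; that is, λ_min ≤ J(K) ≤ λ_max for all K in the Stiefel manifold, and both bounds are achieved at some points of the Stiefel manifold. -/
open Matrix BigOperators ComplexOrder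

/-!
For a Kraus family `K`, the state `σ = ∑ i, K i * ρ * (K i)ᴴ` is again a density matrix. Writing
`O = U * diagonal λ * Uᴴ`, the objective `re (tr (σ * O)) = ∑ j, (Uᴴ * σ * U) j j * λ j` is a
convex combination of the eigenvalues of `O`, which gives both bounds. An eigenvalue `λ j` with
unit eigenvector `v` is attained by the measure-and-prepare channel with the `n ≤ n²` Kraus
operators `vecMulVec v (Pi.single i 1)` (padded by zeros), which sends every state to
`vecMulVec v (star v)`, whose expectation of `O` is `λ j`.
-/

open Function

lemma ciInf_le_sum_mul {ι : Type*} [Fintype ι] {w : ι → ℝ} (hw₀ : ∀ i, 0 ≤ w i)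
    (hw₁ : ∑ i, w i = 1) (f : ι → ℝ) : ⨅ i, f i ≤ ∑ i, w i * f i :=
  calc ⨅ i, f i = ∑ i, w i * ⨅ i, f i := by rw [← Finset.sum_mul, hw₁, one_mul]
    _ ≤ ∑ i, w i * f i := Finset.sum_le_sum fun i _ =>
        mul_le_mul_of_nonneg_left (ciInf_le (Set.finite_range f).bddBelow i) (hw₀ i)

lemma sum_mul_le_ciSup {ι : Type*} [Fintype ι] {w : ι → ℝ} (hw₀ : ∀ i, 0 ≤ w i)
    (hw₁ : ∑ i, w i = 1) (f : ι → ℝ) : ∑ i, w i * f i ≤ ⨆ i, f i :=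
  calc ∑ i, w i * f i ≤ ∑ i, w i * ⨆ i, f i := Finset.sum_le_sum fun i _ =>
        mul_le_mul_of_nonneg_left (le_ciSup (Set.finite_range f).bddAbove i) (hw₀ i)
    _ = ⨆ i, f i := by rw [← Finset.sum_mul, hw₁, one_mul]

lemma Fintype.sum_comp_extend_zero {ι κ M N : Type*} [Fintype ι] [Fintype κ] [Zero M]
    [AddCommMonoid N] {e : ι → κ} (he : Injective e) (K : ι → M) {F : M → N} (hF : F 0 = 0) :
    ∑ k, F (extend e K 0 k) = ∑ i, F (K i) :=
  (Fintype.sum_of_injective e he _ _ (fun k hk => by rw [extend_apply' _ _ _ hk]; exact hF)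
    fun i => by rw [he.extend_apply]).symm

namespace Matrix

variable {n m ι R : Type*} [Fintype n]

lemma nonempty_of_trace_eq_one [Semiring R] [Nontrivial R] {A : Matrix n n R}
    (h : A.trace = 1) : Nonempty n := by
  by_contra hn
  rw [not_nonempty_iff] at hn
  simp [trace] at h

lemma trace_sum_mul_mul_conjTranspose [Fintype m] [Fintype ι] [CommSemiring R] [StarRing R]
    (K : ι → Matrix m n R) (ρ : Matrix n n R) :
    (∑ i, K i * ρ * (K i)ᴴ).trace = ((∑ i, (K i)ᴴ * K i) * ρ).trace := by
  simp only [trace_sum, Finset.sum_mul, trace_mul_cycle (K _) ρ]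

section MeasurePrepare

variable [CommSemiring R] [StarRing R]

lemma sum_conjTranspose_mul_vecMulVec_single [DecidableEq n] [Fintype m] {v : m → R}
    (hv : star v ⬝ᵥ v = 1) :
    ∑ j : n, (vecMulVec v (Pi.single j 1))ᴴ * vecMulVec v (Pi.single j 1) = 1 := by
  simp [vecMulVec_mul_vecMulVec, hv, ← single_eq_single_vecMulVec_single, sum_single_one]

lemma sum_vecMulVec_single_mul_mul_conjTranspose [DecidableEq n] (v : m → R)
    (ρ : Matrix n n R) :
    ∑ j : n, vecMulVec v (Pi.single j 1) * ρ * (vecMulVec v (Pi.single j 1))ᴴ =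
      ρ.trace • vecMulVec v (star v) := by
  simp only [conjTranspose_vecMulVec, vecMulVec_mul, ← Pi.single_star, star_one, single_one_vecMul,
    vecMul_vecMulVec, dotProduct_single_one, vecMulVec_smul, trace, Finset.sum_smul]
  rfl

lemma trace_vecMulVec_star_mul_of_mulVec_eq_smul {O : Matrix n n R} {v : n → R} {μ : R}
    (hv : star v ⬝ᵥ v = 1) (hvO : O *ᵥ v = μ • v) : (vecMulVec v (star v) * O).trace = μ := by
  rw [vecMulVec_mul, trace_vecMulVec, dotProduct_comm, ← dotProduct_mulVec, hvO, dotProduct_smul,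
    hv, smul_eq_mul, mul_one]

end MeasurePrepare

section RCLike

variable {𝕜 : Type*} [RCLike 𝕜] [DecidableEq n] {O : Matrix n n 𝕜}

lemma IsHermitian.trace_mul_eq_sum_diag_mul_eigenvalues (hO : O.IsHermitian) (σ : Matrix n n 𝕜) :
    (σ * O).trace =
      ∑ j, ((hO.eigenvectorUnitary : Matrix n n 𝕜)ᴴ * σ * hO.eigenvectorUnitary) j j *
        hO.eigenvalues j := by
  conv_lhs => rw [hO.spectral_theorem, Unitary.conjStarAlgAut_apply, star_eq_conjTranspose,
    ← mul_assoc, ← mul_assoc, trace_mul_cycle, ← mul_assoc]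
  simp [trace, mul_diagonal]

lemma PosSemidef.re_trace_mul_eq_sum_mul_eigenvalues {σ : Matrix n n 𝕜} (hσ : σ.PosSemidef)
    (hσ₁ : σ.trace = 1) (hO : O.IsHermitian) :
    ∃ w : n → ℝ, (∀ j, 0 ≤ w j) ∧ ∑ j, w j = 1 ∧
      RCLike.re (σ * O).trace = ∑ j, w j * hO.eigenvalues j := by
  set U : Matrix n n 𝕜 := (hO.eigenvectorUnitary : Matrix n n 𝕜) with hU
  have hT : (Uᴴ * σ * U).PosSemidef := hσ.conjTranspose_mul_mul_same U
  refine ⟨fun j => RCLike.re ((Uᴴ * σ * U) j j), fun j => ?_, ?_, ?_⟩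
  · exact RCLike.nonneg_iff.mp hT.diag_nonneg |>.1
  · have hUU : U * Uᴴ = 1 := Unitary.coe_mul_star_self hO.eigenvectorUnitary
    calc ∑ j, RCLike.re ((Uᴴ * σ * U) j j) = RCLike.re (Uᴴ * σ * U).trace := (map_sum _ _ _).symm
      _ = 1 := by rw [trace_mul_cycle, hUU, one_mul, hσ₁, RCLike.one_re]
  · rw [hO.trace_mul_eq_sum_diag_mul_eigenvalues, map_sum]
    simp only [RCLike.re_mul_ofReal, hU]

lemma IsHermitian.exists_kraus_trace_mul_eq_eigenvalue (hO : O.IsHermitian) (j : n)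
    {κ : Type*} [Fintype κ] {e : n → κ} (he : Injective e) {ρ : Matrix n n 𝕜}
    (hρ : ρ.trace = 1) :
    ∃ K : κ → Matrix n n 𝕜, ∑ k, (K k)ᴴ * K k = 1 ∧
      ((∑ k, K k * ρ * (K k)ᴴ) * O).trace = hO.eigenvalues j := by
  set v : n → 𝕜 := ⇑(hO.eigenvectorBasis j)
  have hv : star v ⬝ᵥ v = 1 := by
    rw [dotProduct_comm]
    exact hO.eigenvectorBasis.inner_eq_one j
  have hvO : O *ᵥ v = (hO.eigenvalues j : 𝕜) • v := by
    rw [hO.mulVec_eigenvectorBasis j, RCLike.real_smul_eq_coe_smul (K := 𝕜)]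
  refine ⟨extend e (fun i => vecMulVec v (Pi.single i 1)) 0, ?_, ?_⟩
  · rw [Fintype.sum_comp_extend_zero he _ (F := fun A => Aᴴ * A) (by simp)]
    exact sum_conjTranspose_mul_vecMulVec_single hv
  · rw [Fintype.sum_comp_extend_zero he _ (F := fun A => A * ρ * Aᴴ) (by simp),
      sum_vecMulVec_single_mul_mul_conjTranspose, hρ, one_smul]
    exact trace_vecMulVec_star_mul_of_mulVec_eq_smul hv hvO

end RCLike

end Matrix

/-- With `λ = n²` Kraus operators, the objective `J(K) = Tr[(∑ i, K i ρ (K i)ᴴ) O]` on the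
Stiefel manifold `{K | ∑ i, (K i)ᴴ K i = 1}` is bounded between the smallest and largest
eigenvalues of the Hermitian observable `O`, and both bounds are attained. -/
theorem landscape_global_extrema (n : ℕ)
    (ρ O : Matrix (Fin n) (Fin n) ℂ)
    (hρ : ρ.PosSemidef) (hρtr : ρ.trace = 1) (hO : O.IsHermitian) :
    (∀ K : Fin (n ^ 2) → Matrix (Fin n) (Fin n) ℂ, (∑ i, (K i)ᴴ * K i = 1) →
        (⨅ i, hO.eigenvalues i) ≤ (Matrix.trace ((∑ i, K i * ρ * (K i)ᴴ) * O)).re ∧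
        (Matrix.trace ((∑ i, K i * ρ * (K i)ᴴ) * O)).re ≤ ⨆ i, hO.eigenvalues i) ∧
    (∃ K : Fin (n ^ 2) → Matrix (Fin n) (Fin n) ℂ, (∑ i, (K i)ᴴ * K i = 1) ∧
        (Matrix.trace ((∑ i, K i * ρ * (K i)ᴴ) * O)).re = ⨅ i, hO.eigenvalues i) ∧
    (∃ K : Fin (n ^ 2) → Matrix (Fin n) (Fin n) ℂ, (∑ i, (K i)ᴴ * K i = 1) ∧
        (Matrix.trace ((∑ i, K i * ρ * (K i)ᴴ) * O)).re = ⨆ i, hO.eigenvalues i) := by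
  have : Nonempty (Fin n) := nonempty_of_trace_eq_one hρtr
  have he : Injective (Fin.castLE (Nat.le_self_pow two_ne_zero n)) := Fin.castLE_injective _
  refine ⟨fun K hK => ?_, ?_, ?_⟩
  · have hσ : (∑ i, K i * ρ * (K i)ᴴ).PosSemidef :=
      posSemidef_sum _ fun i _ => hρ.mul_mul_conjTranspose_same (K i)
    have hσ₁ : (∑ i, K i * ρ * (K i)ᴴ).trace = 1 := by
      rw [trace_sum_mul_mul_conjTranspose, hK, one_mul, hρtr]
    obtain ⟨w, hw₀, hw₁, hJ⟩ := hσ.re_trace_mul_eq_sum_mul_eigenvalues hσ₁ hO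
    rw [← RCLike.re_to_complex, hJ]
    exact ⟨ciInf_le_sum_mul hw₀ hw₁ _, sum_mul_le_ciSup hw₀ hw₁ _⟩
  · obtain ⟨j, hj⟩ := exists_eq_ciInf_of_finite (f := hO.eigenvalues)
    obtain ⟨K, hK, hJ⟩ := hO.exists_kraus_trace_mul_eq_eigenvalue j he hρtr
    exact ⟨K, hK, by rw [hJ]; exact hj⟩
  · obtain ⟨j, hj⟩ := exists_eq_ciSup_of_finite (f := hO.eigenvalues)
    obtain ⟨K, hK, hJ⟩ := hO.exists_kraus_trace_mul_eq_eigenvalue j he hρtr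
    exact ⟨K, hK, by rw [hJ]; exact hj⟩
end
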